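/- Let F be a finite field, ω ∈ F of multiplicative order n, and suppose n = r₁·r₂. Write each index j as j = j₁r₁ + j₀ with 0 ≤ j₀ < r₁, 0 ≤ j₁ < r₂, and each index i as i = i₁r₂ + i₀ with 0 ≤ i₀ < r₂, 0 ≤ i₁ < r₁. Define x₁(j₀, i₀) = ∑_{i₁=0}^{r₁-1} v_{i₁r₂+i₀} · ω^{j₀ i₁ r₂}. Then the DFT satisfies V_{j₁r₁+j₀} = ∑_{i₀=0}^{r₂-1} x₁(j₀, i₀) · ω^{(j₁r₁+j₀) i₀}. -/

import Mathlib

/-!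
Split the summation index as `i = i₁ r₂ + i₀`. Since `ω ^ (r₁ r₂) = 1`, the exponent
`(i₁ r₂ + i₀)(j₁ r₁ + j₀)` only matters modulo `r₁ r₂`, where the term `i₁ j₁ r₁ r₂` vanishes and
what is left factors as `j₀ i₁ r₂ + (j₁ r₁ + j₀) i₀`.
-/

open Finset

theorem Finset.sum_range_mul_eq_sum_sum {M : Type*} [AddCommMonoid M] (f : ℕ → M) (r₁ r₂ : ℕ) :
    ∑ i ∈ range (r₁ * r₂), f i = ∑ i₀ ∈ range r₂, ∑ i₁ ∈ range r₁, f (i₁ * r₂ + i₀) := by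
  induction r₁ with
  | zero => simp
  | succ r₁ ih =>
    simp only [Nat.succ_mul, sum_range_add, ih, sum_range_succ, sum_add_distrib]

theorem pow_mixed_radix_mul_eq {M : Type*} [Monoid M] {ω : M} {r₁ r₂ : ℕ}
    (hω : ω ^ (r₁ * r₂) = 1) (i₀ i₁ j₀ j₁ : ℕ) :
    ω ^ ((i₁ * r₂ + i₀) * (j₁ * r₁ + j₀)) = ω ^ (j₀ * i₁ * r₂) * ω ^ ((j₁ * r₁ + j₀) * i₀) := by
  have hexp : (i₁ * r₂ + i₀) * (j₁ * r₁ + j₀) =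
      r₁ * r₂ * (i₁ * j₁) + (j₀ * i₁ * r₂ + (j₁ * r₁ + j₀) * i₀) := by ring
  rw [hexp, pow_add, pow_mul, hω, one_pow, one_mul, pow_add]

theorem cooley_tukey_one_stage_general {F : Type*} [Field F]
    (n r₁ r₂ : ℕ) (hn : n = r₁ * r₂)
    (ω : F) (hω : orderOf ω = n)
    (v V : ℕ → F) (hV : ∀ j, V j = ∑ i ∈ Finset.range n, ω ^ (i * j) * v i)
    (j₀ j₁ : ℕ) :
    V (j₁ * r₁ + j₀) =
      ∑ i₀ ∈ Finset.range r₂,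
        (∑ i₁ ∈ Finset.range r₁, v (i₁ * r₂ + i₀) * ω ^ (j₀ * i₁ * r₂))
          * ω ^ ((j₁ * r₁ + j₀) * i₀) := by
  have hωn : ω ^ (r₁ * r₂) = 1 := hn ▸ hω ▸ pow_orderOf_eq_one ω
  rw [hV, hn, sum_range_mul_eq_sum_sum]
  refine sum_congr rfl fun i₀ _ => ?_
  rw [sum_mul]
  refine sum_congr rfl fun i₁ _ => ?_
  rw [pow_mixed_radix_mul_eq hωn]
  ring

theorem cooley_tukey_one_stage {F : Type*} [Field F] [Fintype F]
    (n r₁ r₂ : ℕ) (hr₁ : 0 < r₁) (hr₂ : 0 < r₂) (hn : n = r₁ * r₂)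
    (ω : F) (hω : orderOf ω = n)
    (v V : ℕ → F) (hV : ∀ j, V j = ∑ i ∈ Finset.range n, ω ^ (i * j) * v i)
    (j₀ j₁ : ℕ) (hj₀ : j₀ < r₁) (hj₁ : j₁ < r₂) :
    V (j₁ * r₁ + j₀) =
      ∑ i₀ ∈ Finset.range r₂,
        (∑ i₁ ∈ Finset.range r₁, v (i₁ * r₂ + i₀) * ω ^ (j₀ * i₁ * r₂))
          * ω ^ ((j₁ * r₁ + j₀) * i₀) :=
  cooley_tukey_one_stage_general n r₁ r₂ hn ω hω v V hV j₀ j₁
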